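/- arXiv:math/9606209 — 2 statements merged into one kernel-verified Lean document; each statement's English description precedes it below -/
import Mathlib

section
/- For every countable ordinal α ≥ 1 there exists a well-founded tree t with o(t) = α which is minimal of order α: for every well-founded tree T with o(T) ≥ α there exists a subtree T' of T and a tree isomorphism from t onto T'. -/
universe u v

open Ordinal

/- ## General machinery for trees (as partially ordered sets / sets with a relation) -/

section Trees

variable {σ : Type*} {τ : Type*}

/-- The derived tree `D(T) = {x ∈ T : x < y for some y ∈ T}` (with respect to a strict
relation `lt`): `T` with all its terminal nodes removed. -/
def derivSet (lt : σ → σ → Prop) (T : Set σ) : Set σ :=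
  {x ∈ T | ∃ y ∈ T, lt x y}

/-- The transfinite iterates of the derivative: `T⁰ = T`, `T^(γ+1) = D(T^γ)`, and
`T^λ = ⋂_{γ<λ} T^γ` for limit `λ`. -/
noncomputable def derivIter (lt : σ → σ → Prop) (T : Set σ) (o : Ordinal.{0}) : Set σ :=
  Ordinal.limitRecOn (motive := fun _ => Set σ) o T (fun _ S => derivSet lt S)
    (fun o _ ih => ⋂ (o' : Ordinal.{0}) (h : o' < o), ih o' h)

/-- A tree is well-founded if it contains no infinite linearly ordered subset. -/
def TreeWF (lt : σ → σ → Prop) (T : Set σ) : Prop :=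
  ¬∃ S : Set σ, S ⊆ T ∧ S.Infinite ∧ ∀ x ∈ S, ∀ y ∈ S, x ≠ y → lt x y ∨ lt y x

/-- The order `o(T)` of a (well-founded) tree: the least `γ` with `T^γ = ∅`. -/
noncomputable def treeOrder (lt : σ → σ → Prop) (T : Set σ) : Ordinal.{0} :=
  sInf {o : Ordinal.{0} | derivIter lt T o = ∅}

/-- A tree isomorphism from `S` (ordered by `leS`) onto `T` (ordered by `leT`):
a bijection of `S` onto `T` preserving order in both directions. -/
def TreeIso (leS : σ → σ → Prop) (leT : τ → τ → Prop) (S : Set σ) (T : Set τ) : Prop :=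
  ∃ f : σ → τ, (∀ x ∈ S, f x ∈ T) ∧ (∀ y ∈ T, ∃ x ∈ S, f x = y) ∧
    Set.InjOn f S ∧ ∀ x ∈ S, ∀ y ∈ S, (leS x y ↔ leT (f x) (f y))

/-- The strict relation associated to a partial order relation `le`. -/
def strictOf (le : σ → σ → Prop) : σ → σ → Prop := fun a b => le a b ∧ a ≠ b

/-- A tree (in the abstract sense) inside a partially ordered set: a countable nonempty
set such that, for each `x ∈ T`, `{y ∈ T : y < x}` is finite and linearly ordered. -/
def IsAbsTree (le : σ → σ → Prop) (T : Set σ) : Prop :=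
  T.Nonempty ∧ T.Countable ∧
    ∀ x ∈ T, {y ∈ T | strictOf le y x}.Finite ∧
      ∀ y ∈ T, strictOf le y x → ∀ z ∈ T, strictOf le z x → le y z ∨ le z y

end Trees

/- ## Trees on a set `X`: subsets of the nonempty finite sequences from `X`,
ordered by end-extension (list prefix order). -/

section TreesOn

variable {X : Type*}

/-- The strict prefix (end-extension) order on finite sequences. -/
def listLt : List X → List X → Prop := fun x y => x <+: y ∧ x ≠ y

/-- A tree on a set `X`: a countable nonempty collection of nonempty finite sequences
from `X` (ordered by end-extension). -/
def IsTreeOn (T : Set (List X)) : Prop :=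
  T.Nonempty ∧ T.Countable ∧ ∀ l ∈ T, l ≠ []

end TreesOn

/- ## ℓ₁ / ℓ∞ / ℓ_p nodes and trees on a Banach space -/

section Banach

variable {X : Type*} [NormedAddCommGroup X] [NormedSpace ℝ X]

/-- `(x_i)₁^m` is a finite sequence of norm-one vectors `K`-equivalent to the unit vector
basis of `ℓ₁^m`. -/
def IsL1Node (K : ℝ) (l : List X) : Prop :=
  (∀ x ∈ l, ‖x‖ = 1) ∧
  ∃ c C : ℝ, 0 < c ∧ 0 < C ∧ C / c ≤ K ∧
    ∀ a : Fin l.length → ℝ,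
      c * (∑ i, |a i|) ≤ ‖∑ i, a i • l.get i‖ ∧
        ‖∑ i, a i • l.get i‖ ≤ C * (∑ i, |a i|)

/-- `(x_i)₁^m` is a finite sequence of norm-one vectors `K`-equivalent to the unit vector
basis of `ℓ∞^m`. -/
def IsLinfNode (K : ℝ) (l : List X) : Prop :=
  (∀ x ∈ l, ‖x‖ = 1) ∧
  ∃ c C : ℝ, 0 < c ∧ 0 < C ∧ C / c ≤ K ∧
    ∀ a : Fin l.length → ℝ,
      c * (⨆ i, |a i|) ≤ ‖∑ i, a i • l.get i‖ ∧
        ‖∑ i, a i • l.get i‖ ≤ C * (⨆ i, |a i|)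

/-- `(x_i)₁^m` is a finite sequence of norm-one vectors `K`-equivalent to the unit vector
basis of `ℓ_p^m`. -/
noncomputable def IsLpNode (p K : ℝ) (l : List X) : Prop :=
  (∀ x ∈ l, ‖x‖ = 1) ∧
  ∃ c C : ℝ, 0 < c ∧ 0 < C ∧ C / c ≤ K ∧
    ∀ a : Fin l.length → ℝ,
      c * ((∑ i, |a i| ^ p) ^ (1 / p)) ≤ ‖∑ i, a i • l.get i‖ ∧
        ‖∑ i, a i • l.get i‖ ≤ C * ((∑ i, |a i| ^ p) ^ (1 / p))

/-- An ℓ₁-`K`-tree on `X`. -/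
def IsL1KTree (K : ℝ) (T : Set (List X)) : Prop :=
  IsTreeOn T ∧ ∀ l ∈ T, IsL1Node K l

/-- An ℓ∞-`K`-tree on `X`. -/
def IsLinfKTree (K : ℝ) (T : Set (List X)) : Prop :=
  IsTreeOn T ∧ ∀ l ∈ T, IsLinfNode K l

/-- An ℓ_p-`K`-tree on `X`. -/
def IsLpKTree (p K : ℝ) (T : Set (List X)) : Prop :=
  IsTreeOn T ∧ ∀ l ∈ T, IsLpNode p K l

/-- `ys` is a normalized block basis of the finite sequence `zs`:
`y_j = ∑_{i ∈ E_j} a_i z_i` with `‖y_j‖ = 1` and `E₁ < E₂ < …` successive subsets. -/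
def IsNormBlockOf (ys zs : List X) : Prop :=
  ∃ (E : Fin ys.length → Finset (Fin zs.length)) (a : Fin zs.length → ℝ),
    (∀ j, (E j).Nonempty) ∧
    (∀ j₁ j₂ : Fin ys.length, j₁ < j₂ → ∀ i₁ ∈ E j₁, ∀ i₂ ∈ E j₂, i₁ < i₂) ∧
    ∀ j, ys.get j = ∑ i ∈ E j, a i • zs.get i ∧ ‖ys.get j‖ = 1

/-- `p` is the initial node of the subtree `T'` lying below `x`. -/
def IsInitialBelow (T' : Set (List X)) (p x : List X) : Prop :=
  p ∈ T' ∧ p <+: x ∧ ∀ q ∈ T', q <+: x → p <+: q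

/-- `k` is the length of the predecessor node of `p` in `T` (`k = 0` when `p` is an
initial node of `T`). -/
def PredLenIn (T : Set (List X)) (p : List X) (k : ℕ) : Prop :=
  (k = 0 ∧ ∀ z ∈ T, z <+: p → z = p) ∨
  (∃ z ∈ T, z <+: p ∧ z ≠ p ∧ z.length = k ∧ ∀ w ∈ T, w <+: p → w ≠ p → w <+: z)

/-- `S` is a block subtree of `T` (written `S ⪯ T`): there are a subtree `T' ⊆ T` and a
tree isomorphism `f : T' → S` such that each `f(x)` is built from normalized block bases
as in the definition of Judd–Odell. -/
def IsBlockSubtree (S T : Set (List X)) : Prop :=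
  ∃ (T' : Set (List X)) (f : List X → List X),
    T' ⊆ T ∧
    (∀ x ∈ T', f x ∈ S) ∧
    (∀ y ∈ S, ∃ x ∈ T', f x = y) ∧
    (∀ x ∈ T', ∀ y ∈ T', (x <+: y ↔ f x <+: f y)) ∧
    (∀ x ∈ T', ∀ p, IsInitialBelow T' p x → ∀ k, PredLenIn T p k →
      IsNormBlockOf (f x) (x.drop k)) ∧
    (∀ x ∈ T', ∀ x' ∈ T', listLt x' x → (∀ w ∈ T', listLt w x → w <+: x') →
      ∃ b : List X, IsNormBlockOf b (x.drop x'.length) ∧ f x = f x' ++ b)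

/- ## Schauder bases, block basis trees and the ℓ₁-indices -/

/-- `e` is a Schauder basis of `X`: every `x ∈ X` has a unique representation
`x = ∑ a_i e_i` (convergence of the partial sums in norm). -/
def IsSchauderBasis (e : ℕ → X) : Prop :=
  ∀ x : X, ∃! a : ℕ → ℝ,
    Filter.Tendsto (fun n => ∑ i ∈ Finset.range n, a i • e i) Filter.atTop (nhds x)

/-- A node which is a finite normalized block basis of `(e_i)`:
norm-one vectors with consecutive finite supports. -/
def IsBlockNode (e : ℕ → X) (l : List X) : Prop :=
  l ≠ [] ∧ ∃ (E : Fin l.length → Finset ℕ) (a : ℕ → ℝ),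
    (∀ j, (E j).Nonempty) ∧
    (∀ j₁ j₂ : Fin l.length, j₁ < j₂ → ∀ i₁ ∈ E j₁, ∀ i₂ ∈ E j₂, i₁ < i₂) ∧
    ∀ j, l.get j = ∑ i ∈ E j, a i • e i ∧ ‖l.get j‖ = 1

/-- A node which is a finite normalized block basis of `(e_i)_{i>n}`. -/
def IsBlockNodeFrom (e : ℕ → X) (n : ℕ) (l : List X) : Prop :=
  l ≠ [] ∧ ∃ (E : Fin l.length → Finset ℕ) (a : ℕ → ℝ),
    (∀ j, (E j).Nonempty) ∧
    (∀ j, ∀ i ∈ E j, n < i) ∧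
    (∀ j₁ j₂ : Fin l.length, j₁ < j₂ → ∀ i₁ ∈ E j₁, ∀ i₂ ∈ E j₂, i₁ < i₂) ∧
    ∀ j, l.get j = ∑ i ∈ E j, a i • e i ∧ ‖l.get j‖ = 1

/-- An ℓ₁-`K`-block basis tree on `X` with respect to `(e_i)`. -/
def IsL1KBlockTree (e : ℕ → X) (K : ℝ) (T : Set (List X)) : Prop :=
  IsL1KTree K T ∧ ∀ l ∈ T, IsBlockNode e l

/-- An ℓ₁-`K`-block basis tree on `X` with respect to `(e_i)_{i>n}`. -/
def IsL1KBlockTreeFrom (e : ℕ → X) (n : ℕ) (K : ℝ) (T : Set (List X)) : Prop :=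
  IsL1KTree K T ∧ ∀ l ∈ T, IsBlockNodeFrom e n l

/-- `I_b(X, K)`: the supremum of the orders of ℓ₁-`K`-block basis trees on `X`. -/
noncomputable def blockIndexK (e : ℕ → X) (K : ℝ) : Ordinal.{0} :=
  sSup {o : Ordinal.{0} | ∃ T : Set (List X),
    IsL1KBlockTree e K T ∧ TreeWF listLt T ∧ treeOrder listLt T = o}

/-- `I_b(X)`: the block basis ℓ₁-index of `X` with respect to `(e_i)`. -/
noncomputable def blockIndex (e : ℕ → X) : Ordinal.{0} :=
  sSup {o : Ordinal.{0} | ∃ K : ℝ, 1 ≤ K ∧ o = blockIndexK e K}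

/-- `I_b(X_n, K)`: the index over trees of blocks of `(e_i)_{i>n}`, i.e. the block basis
index of the closed span `X_n` of `(e_i)_{i>n}` with respect to the basis `(e_i)_{i>n}`. -/
noncomputable def blockIndexKFrom (e : ℕ → X) (n : ℕ) (K : ℝ) : Ordinal.{0} :=
  sSup {o : Ordinal.{0} | ∃ T : Set (List X),
    IsL1KBlockTreeFrom e n K T ∧ TreeWF listLt T ∧ treeOrder listLt T = o}

end Banach

/-- `I(X, K)`: the supremum of the orders of ℓ₁-`K`-trees on `X`. -/
noncomputable def l1IndexK (X : Type*) [NormedAddCommGroup X] [NormedSpace ℝ X]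
    (K : ℝ) : Ordinal.{0} :=
  sSup {o : Ordinal.{0} | ∃ T : Set (List X),
    IsL1KTree K T ∧ TreeWF listLt T ∧ treeOrder listLt T = o}

/-- `I(X)`: the Bourgain ℓ₁-index of `X`. -/
noncomputable def l1Index (X : Type*) [NormedAddCommGroup X] [NormedSpace ℝ X] :
    Ordinal.{0} :=
  sSup {o : Ordinal.{0} | ∃ K : ℝ, 1 ≤ K ∧ o = l1IndexK X K}

/-- `X` contains a sequence of norm-one vectors equivalent to the unit vector basis of
`ℓ₁`, i.e. `X` contains a subspace isomorphic to `ℓ₁`. -/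
def ContainsL1 (X : Type*) [NormedAddCommGroup X] [NormedSpace ℝ X] : Prop :=
  ∃ x : ℕ → X, (∀ n, ‖x n‖ = 1) ∧ ∃ c : ℝ, 0 < c ∧
    ∀ (n : ℕ) (a : Fin n → ℝ), c * (∑ i, |a i|) ≤ ‖∑ i, a i • x i.1‖
/- ## Schreier families and ℓ₁-spreading models -/

/-- `F ∈ S₁`: the Schreier family, `|F| ≤ min F` (the empty set belongs vacuously). -/
def InS1 (F : Finset ℕ) : Prop := ∀ m ∈ F, F.card ≤ m

/-- `F ∈ S₂ = S₁[S₁]`: `F = F₁ ∪ … ∪ F_k` with each `F_i ∈ S₁`, `F₁ < … < F_k`, and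
`{m₁ < … < m_k} ∈ S₁` with `m₁ ≤ F₁ < m₂ ≤ F₂ < … < m_k ≤ F_k`. -/
def InS2 (F : Finset ℕ) : Prop :=
  F = ∅ ∨ ∃ (k : ℕ) (_ : 0 < k) (G : Fin k → Finset ℕ) (m : Fin k → ℕ),
    (∀ i, InS1 (G i)) ∧
    (∀ i j : Fin k, i < j → ∀ a ∈ G i, ∀ b ∈ G j, a < b) ∧
    StrictMono m ∧
    InS1 (Finset.image m Finset.univ) ∧
    (∀ i, ∀ a ∈ G i, m i ≤ a) ∧
    (∀ i j : Fin k, i < j → ∀ a ∈ G i, a < m j) ∧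
    F = Finset.univ.biUnion G

section SM

variable {X : Type*} [NormedAddCommGroup X] [NormedSpace ℝ X]

/-- `(x_i)_{i ∈ F}` is `K`-equivalent to the unit vector basis of `ℓ₁^{|F|}`. -/
def L1EquivOn (K : ℝ) (x : ℕ → X) (F : Finset ℕ) : Prop :=
  ∃ c C : ℝ, 0 < c ∧ 0 < C ∧ C / c ≤ K ∧
    ∀ a : ℕ → ℝ,
      c * (∑ i ∈ F, |a i|) ≤ ‖∑ i ∈ F, a i • x i‖ ∧
        ‖∑ i ∈ F, a i • x i‖ ≤ C * (∑ i ∈ F, |a i|)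

/-- A normalized basic sequence: norm-one vectors forming a Schauder basis of their
closed linear span (characterized by the uniform boundedness of the projections). -/
def IsNormalizedBasic (x : ℕ → X) : Prop :=
  (∀ n, ‖x n‖ = 1) ∧ ∃ C : ℝ, 1 ≤ C ∧ ∀ m n : ℕ, m ≤ n → ∀ a : ℕ → ℝ,
    ‖∑ i ∈ Finset.range m, a i • x i‖ ≤ C * ‖∑ i ∈ Finset.range n, a i • x i‖

/- ## Helpers for Tsirelson's space -/

/-- The vector `∑ a_i e_i` of `X` associated to a finitely supported family of reals. -/
noncomputable def finsuppVec (e : ℕ → X) (a : ℕ →₀ ℝ) : X := a.sum fun i c => c • e i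

end SM

/-- The restriction `Ea` of a finitely supported family to a finite set of coordinates. -/
noncomputable def restrictTo (E : Finset ℕ) (a : ℕ →₀ ℝ) : ℕ →₀ ℝ :=
  ∑ i ∈ E, Finsupp.single i (a i)

/-- `(E_i)₁ⁿ` is `S₁`-admissible: `E₁ < … < E_n` nonempty finite sets with
`(min E_i)₁ⁿ ∈ S₁`, i.e. `n ≤ min E₁`. -/
def S1Admissible {n : ℕ} (E : Fin n → Finset ℕ) : Prop :=
  0 < n ∧ (∀ i, (E i).Nonempty) ∧
    (∀ i j : Fin n, i < j → ∀ a ∈ E i, ∀ b ∈ E j, a < b) ∧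
    (∀ i : Fin n, ∀ a ∈ E i, n ≤ a)
/- ## Auxiliary machinery for the minimal-trees theorem -/

section TreesAux

variable {σ : Type*} {τ : Type*} {lt : σ → σ → Prop} {T S : Set σ}

theorem derivIter_zero : derivIter lt T 0 = T := Ordinal.limitRecOn_zero ..

theorem derivIter_succ (o : Ordinal.{0}) :
    derivIter lt T (Order.succ o) = derivSet lt (derivIter lt T o) :=
  Ordinal.limitRecOn_succ ..

theorem derivIter_limit {o : Ordinal.{0}} (ho : Order.IsSuccLimit o) :
    derivIter lt T o = ⋂ (o' : Ordinal.{0}) (_ : o' < o), derivIter lt T o' :=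
  Ordinal.limitRecOn_limit _ _ _ _ ho

theorem ord_induction {motive : Ordinal.{0} → Prop} (o : Ordinal.{0}) (H₁ : motive 0)
    (H₂ : ∀ o, motive o → motive (Order.succ o))
    (H₃ : ∀ o, Order.IsSuccLimit o → (∀ o' < o, motive o') → motive o) : motive o :=
  Ordinal.limitRecOn o H₁ (fun o h => by rw [Ordinal.add_one_eq_succ]; exact H₂ o h) H₃

theorem derivSet_subset : derivSet lt S ⊆ S := fun _ hx => hx.1

theorem derivSet_mono (h : S ⊆ T) : derivSet lt S ⊆ derivSet lt T :=
  fun x hx => ⟨h hx.1, hx.2.imp fun y hy => ⟨h hy.1, hy.2⟩⟩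

theorem derivIter_antitone {o₁ o₂ : Ordinal.{0}} (h : o₁ ≤ o₂) :
    derivIter lt T o₂ ⊆ derivIter lt T o₁ := by
  induction o₂ using ord_induction with
  | H₁ => rw [nonpos_iff_eq_zero.mp h]
  | H₂ o ih =>
    rcases Order.le_succ_iff_eq_or_le.mp h with h | h
    · subst h; exact fun x hx => hx
    · rw [derivIter_succ]; exact (derivSet_subset).trans (ih h)
  | H₃ o ho ih =>
    rcases eq_or_lt_of_le h with h | h
    · rw [h]
    · rw [derivIter_limit ho]
      exact fun x hx => by
        have := Set.mem_iInter.mp hx o₁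
        exact Set.mem_iInter.mp this h

theorem derivIter_subset (o : Ordinal.{0}) : derivIter lt T o ⊆ T := by
  simpa [derivIter_zero] using derivIter_antitone (T := T) (lt := lt) (zero_le : (0 : Ordinal.{0}) ≤ o)

theorem derivIter_mono (h : S ⊆ T) (o : Ordinal.{0}) :
    derivIter lt S o ⊆ derivIter lt T o := by
  induction o using ord_induction with
  | H₁ => simpa [derivIter_zero] using h
  | H₂ o ih => rw [derivIter_succ, derivIter_succ]; exact derivSet_mono ih
  | H₃ o ho ih =>
    rw [derivIter_limit ho, derivIter_limit ho]
    exact fun x hx => Set.mem_iInter₂.mpr fun o' ho' => ih o' ho' (Set.mem_iInter₂.mp hx o' ho')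

/-- restriction to a relatively-up-closed set -/
theorem derivIter_inter_upclosed {U : Set σ}
    (hU : ∀ x y, x ∈ U → lt x y → y ∈ U) (o : Ordinal.{0}) :
    derivIter lt (T ∩ U) o = derivIter lt T o ∩ U := by
  induction o using ord_induction with
  | H₁ => rw [derivIter_zero, derivIter_zero]
  | H₂ o ih =>
    rw [derivIter_succ, derivIter_succ, ih]
    ext x
    constructor
    · rintro ⟨⟨hxT, hxU⟩, y, ⟨hyT, _⟩, hxy⟩
      exact ⟨⟨hxT, y, hyT, hxy⟩, hxU⟩
    · rintro ⟨⟨hxT, y, hyT, hxy⟩, hxU⟩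
      exact ⟨⟨hxT, hxU⟩, y, ⟨hyT, hU x y hxU hxy⟩, hxy⟩
  | H₃ o ho ih =>
    rw [derivIter_limit ho, derivIter_limit ho]
    ext x
    simp only [Set.mem_iInter, Set.mem_inter_iff]
    constructor
    · intro h
      refine ⟨fun o' ho' => ((ih o' ho').subset (h o' ho')).1, ?_⟩
      exact ((ih 0 ho.pos).subset (h 0 ho.pos)).2
    · rintro ⟨h1, h2⟩ o' ho'
      exact (ih o' ho').symm.subset ⟨h1 o' ho', h2⟩



end TreesAux

section Order

variable {σ : Type*} {τ : Type*} {lt : σ → σ → Prop} {T S : Set σ}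

theorem treeOrder_le_of_empty {o : Ordinal.{0}} (h : derivIter lt T o = ∅) :
    treeOrder lt T ≤ o := csInf_le' h

theorem derivIter_treeOrder (hne : ∃ o : Ordinal.{0}, derivIter lt T o = ∅) :
    derivIter lt T (treeOrder lt T) = ∅ := csInf_mem hne

theorem derivIter_empty_of_le (hne : ∃ o : Ordinal.{0}, derivIter lt T o = ∅)
    {o : Ordinal.{0}} (h : treeOrder lt T ≤ o) : derivIter lt T o = ∅ :=
  Set.eq_empty_of_subset_empty ((derivIter_antitone h).trans (derivIter_treeOrder hne).subset)

theorem le_treeOrder (hne : ∃ o : Ordinal.{0}, derivIter lt T o = ∅) {a : Ordinal.{0}}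
    (h : ∀ γ < a, derivIter lt T γ ≠ ∅) : a ≤ treeOrder lt T := by
  by_contra hc
  exact h _ (lt_of_not_ge hc) (derivIter_treeOrder hne)

theorem treeOrder_eq {a : Ordinal.{0}} (h0 : derivIter lt T a = ∅)
    (h : ∀ γ < a, derivIter lt T γ ≠ ∅) : treeOrder lt T = a :=
  le_antisymm (treeOrder_le_of_empty h0) (le_treeOrder ⟨a, h0⟩ h)

theorem treeOrder_mono (h : S ⊆ T) (hne : ∃ o : Ordinal.{0}, derivIter lt T o = ∅) :
    treeOrder lt S ≤ treeOrder lt T :=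
  treeOrder_le_of_empty (Set.eq_empty_of_subset_empty
    (((derivIter_mono h _).trans (derivIter_treeOrder hne).subset)))

/-- image under a strict-order embedding -/
theorem derivIter_image {lt' : τ → τ → Prop} {g : σ → τ} (hg : Function.Injective g)
    (hiff : ∀ a b, lt' (g a) (g b) ↔ lt a b) (o : Ordinal.{0}) :
    derivIter lt' (g '' S) o = g '' derivIter lt S o := by
  induction o using ord_induction with
  | H₁ => rw [derivIter_zero, derivIter_zero]
  | H₂ o ih =>
    rw [derivIter_succ, derivIter_succ, ih]
    ext y
    constructor
    · rintro ⟨⟨x, hx, rfl⟩, _, ⟨z, hz, rfl⟩, hlt⟩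
      exact ⟨x, ⟨hx, z, hz, (hiff x z).mp hlt⟩, rfl⟩
    · rintro ⟨x, ⟨hx, z, hz, hlt⟩, rfl⟩
      exact ⟨⟨x, hx, rfl⟩, g z, ⟨z, hz, rfl⟩, (hiff x z).mpr hlt⟩
  | H₃ o ho ih =>
    rw [derivIter_limit ho, derivIter_limit ho]
    ext y
    simp only [Set.mem_iInter]
    constructor
    · intro h
      obtain ⟨x, hx0, rfl⟩ := (ih 0 ho.pos).subset (h 0 ho.pos)
      refine ⟨x, Set.mem_iInter₂.mpr fun o' ho' => ?_, rfl⟩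
      obtain ⟨x', hx', he⟩ := (ih o' ho').subset (h o' ho')
      exact hg he ▸ hx'
    · rintro ⟨x, hx, rfl⟩ o' ho'
      exact (ih o' ho').symm.subset ⟨x, Set.mem_iInter₂.mp hx o' ho', rfl⟩

/-- disjoint unions with no cross relations -/
theorem derivIter_iUnion {A : ℕ → Set σ}
    (hdisj : ∀ n m, n ≠ m → ∀ x, x ∈ A n → x ∉ A m)
    (hcross : ∀ n m, n ≠ m → ∀ x ∈ A n, ∀ y ∈ A m, ¬ lt x y) (o : Ordinal.{0}) :
    derivIter lt (⋃ n, A n) o = ⋃ n, derivIter lt (A n) o := by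
  induction o using ord_induction with
  | H₁ => rw [derivIter_zero]; exact Set.iUnion_congr fun n => derivIter_zero.symm
  | H₂ o ih =>
    rw [derivIter_succ, ih]
    ext x
    constructor
    · rintro ⟨hx, y, hy, hlt⟩
      rw [Set.mem_iUnion] at hx hy
      obtain ⟨n, hn⟩ := hx
      obtain ⟨m, hm⟩ := hy
      rcases eq_or_ne n m with rfl | hnm
      · refine Set.mem_iUnion.mpr ⟨n, ?_⟩
        rw [derivIter_succ]
        exact ⟨hn, y, hm, hlt⟩
      · exact absurd hlt (hcross n m hnm x (derivIter_subset _ hn) y (derivIter_subset _ hm))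
    · intro hx
      obtain ⟨n, hn⟩ := Set.mem_iUnion.mp hx
      rw [derivIter_succ] at hn
      obtain ⟨hx', y, hy, hlt⟩ := hn
      exact ⟨Set.mem_iUnion.mpr ⟨n, hx'⟩, y, Set.mem_iUnion.mpr ⟨n, hy⟩, hlt⟩
  | H₃ o ho ih =>
    rw [derivIter_limit ho]
    ext x
    simp only [Set.mem_iInter, Set.mem_iUnion]
    constructor
    · intro h
      obtain ⟨n, hn⟩ := by simpa [ih 0 ho.pos, Set.mem_iUnion] using h 0 ho.pos
      refine ⟨n, ?_⟩
      rw [derivIter_limit ho]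
      refine Set.mem_iInter₂.mpr fun o' ho' => ?_
      obtain ⟨m, hm⟩ := by simpa [ih o' ho', Set.mem_iUnion] using h o' ho'
      rcases eq_or_ne m n with rfl | hmn
      · exact hm
      · exact absurd (derivIter_subset _ hm)
          (hdisj n m hmn.symm x (derivIter_subset _ hn))
    · rintro ⟨n, hn⟩ o' ho'
      rw [ih o' ho']
      rw [derivIter_limit ho] at hn
      exact Set.mem_iUnion.mpr ⟨n, Set.mem_iInter₂.mp hn o' ho'⟩

end Order
section WFLemmas

variable {σ : Type*} {lt : σ → σ → Prop} {T S : Set σ}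

theorem exists_maximal_of_treeWF (htrans : ∀ a b c, lt a b → lt b c → lt a c)
    (hirr : ∀ a, ¬ lt a a) (hwf : TreeWF lt T) {M : Set σ} (hM : M ⊆ T)
    (hne : M.Nonempty) : ∃ m ∈ M, ∀ y ∈ M, ¬ lt m y := by
  by_contra hc
  push_neg at hc
  have hstep : ∀ m : M, ∃ y : M, lt m.1 y.1 := by
    rintro ⟨m, hm⟩
    obtain ⟨y, hy, hlt⟩ := hc m hm
    exact ⟨⟨y, hy⟩, hlt⟩
  choose F hF using hstep
  obtain ⟨m₀, hm₀⟩ := hne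
  set v : ℕ → M := fun n => F^[n] ⟨m₀, hm₀⟩ with hv
  have hmono : ∀ n m : ℕ, n < m → lt (v n).1 (v m).1 := by
    intro n m hnm
    induction m with
    | zero => omega
    | succ m ih =>
      have hstep' : lt (v m).1 (v (m+1)).1 := by
        have : v (m+1) = F (v m) := Function.iterate_succ_apply' F _ _
        rw [this]; exact hF (v m)
      rcases Nat.lt_succ_iff_lt_or_eq.mp hnm with h | h
      · exact htrans _ _ _ (ih h) hstep'
      · rw [h]; exact hstep'
  have hinj : Function.Injective fun n => (v n).1 := by
    intro n m he
    by_contra hne'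
    have he' : (v n).1 = (v m).1 := he
    rcases Nat.lt_or_ge n m with h | h
    · have := hmono n m h; rw [he'] at this; exact hirr _ this
    · have := hmono m n (by omega); rw [he'] at this; exact hirr _ this
  refine hwf ⟨Set.range fun n => (v n).1, ?_, ?_, ?_⟩
  · rintro x ⟨n, rfl⟩; exact hM (v n).2
  · exact Set.infinite_range_of_injective hinj
  · rintro x ⟨n, rfl⟩ y ⟨m, rfl⟩ hxy
    rcases Nat.lt_or_ge n m with h | h
    · exact Or.inl (hmono n m h)
    · rcases Nat.eq_or_lt_of_le h with h' | h'
      · exact absurd (by rw [h']) hxy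
      · exact Or.inr (hmono m n h')

theorem exists_derivIter_empty (htrans : ∀ a b c, lt a b → lt b c → lt a c)
    (hirr : ∀ a, ¬ lt a a) (hT : T.Countable) (hwf : TreeWF lt T) :
    ∃ o : Ordinal.{0}, derivIter lt T o = ∅ := by
  by_contra hc
  push_neg at hc
  by_cases hstab : ∃ o : Ordinal.{0}, derivIter lt T o = derivIter lt T (Order.succ o)
  · obtain ⟨o, ho⟩ := hstab
    have hS : derivSet lt (derivIter lt T o) = derivIter lt T o := by
      rw [← derivIter_succ, ← ho]
    obtain ⟨m, hm, hmax⟩ := exists_maximal_of_treeWF htrans hirr hwf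
      (derivIter_subset (T := T) (lt := lt) o) (hc o)
    obtain ⟨_, y, hy, hlt⟩ := hS.symm ▸ hm
    exact hmax y hy hlt
  · push_neg at hstab
    have hssub : ∀ o : Ordinal.{0}, ∃ x, x ∈ derivIter lt T o ∧
        x ∉ derivIter lt T (Order.succ o) := by
      intro o
      by_contra hno
      push_neg at hno
      refine hstab o (le_antisymm (fun x hx => hno x hx) (derivIter_antitone (Order.le_succ o)))
    choose g hg1 hg2 using hssub
    have hginj : Function.Injective g := by
      have key : ∀ o o' : Ordinal.{0}, o < o' → g o ≠ g o' := by
        intro o o' h he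
        have : g o' ∈ derivIter lt T (Order.succ o) :=
          derivIter_antitone (Order.succ_le_of_lt h) (hg1 o')
        exact hg2 o (he ▸ this)
      intro o o' he
      by_contra hne'
      rcases lt_trichotomy o o' with h | h | h
      · exact key o o' h he
      · exact hne' h
      · exact key o' o h he.symm
    have : Countable T := hT.to_subtype
    obtain ⟨enc, henc⟩ := (by exact this : Countable T).exists_injective_nat
    have : Countable Ordinal.{0} :=
      ⟨⟨fun o => enc ⟨g o, derivIter_subset o (hg1 o)⟩, fun o o' he => by
        have := henc he
        exact hginj (congrArg Subtype.val this)⟩⟩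
    have : Small.{0} Ordinal.{0} := by exact Countable.toSmall _
    exact not_small_ordinal.{0} this

end WFLemmas

section PO

variable {σ : Type*} {le : σ → σ → Prop} {T S : Set σ}

theorem strictOf_trans (htrans : ∀ a b c, le a b → le b c → le a c)
    (hanti : ∀ a b, le a b → le b a → a = b) :
    ∀ a b c, strictOf le a b → strictOf le b c → strictOf le a c := by
  rintro a b c ⟨h1, h2⟩ ⟨h3, h4⟩
  refine ⟨htrans _ _ _ h1 h3, fun he => ?_⟩
  subst he
  exact h2 (hanti _ _ h1 h3)

theorem strictOf_irrefl : ∀ a, ¬ strictOf le a a := fun _ h => h.2 rfl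

/-- derivIter sets are downward closed along `le` (within `T`) -/
theorem mem_derivIter_of_le (htrans : ∀ a b c, le a b → le b c → le a c)
    (hanti : ∀ a b, le a b → le b a → a = b)
    {x z : σ} (hxT : x ∈ T) (hxz : le x z) (o : Ordinal.{0})
    (hz : z ∈ derivIter (strictOf le) T o) : x ∈ derivIter (strictOf le) T o := by
  revert hz
  induction o using ord_induction with
  | H₁ => intro hz; rwa [derivIter_zero]
  | H₂ o ih =>
    intro hz
    rw [derivIter_succ] at hz ⊢
    obtain ⟨hzA, w, hwA, hzw⟩ := hz
    refine ⟨ih hzA, w, hwA, htrans _ _ _ hxz hzw.1, fun he => ?_⟩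
    subst he
    exact hzw.2 (hanti _ _ hzw.1 hxz)
  | H₃ o ho ih =>
    intro hz
    rw [derivIter_limit ho] at hz ⊢
    exact Set.mem_iInter₂.mpr fun o' ho' => ih o' ho' (Set.mem_iInter₂.mp hz o' ho')

end PO
section Root

variable {σ : Type*} {lt : σ → σ → Prop} {S : Set σ}

theorem derivIter_insert_root {r : σ} (hirr : ¬ lt r r) (hr : r ∉ S)
    (hb : ∀ x ∈ S, lt r x) (hnb : ∀ x ∈ S, ¬ lt x r)
    (hne : ∃ o : Ordinal.{0}, derivIter lt S o = ∅) :
    treeOrder lt (insert r S) = Order.succ (treeOrder lt S) := by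
  set a := treeOrder lt S with ha
  have key : ∀ o : Ordinal.{0}, o ≤ a → derivIter lt (insert r S) o
      = insert r (derivIter lt S o) := by
    intro o
    induction o using ord_induction with
    | H₁ => intro _; rw [derivIter_zero, derivIter_zero]
    | H₂ o ih =>
      intro hle
      have ho : o < a := lt_of_lt_of_le (Order.lt_succ o) hle
      have hA : (derivIter lt S o).Nonempty := by
        rw [Set.nonempty_iff_ne_empty]
        intro h
        exact absurd (treeOrder_le_of_empty h) (not_le.mpr ho)
      rw [derivIter_succ, ih ho.le, derivIter_succ]
      ext x
      constructor
      · rintro ⟨hx, y, hy, hlt⟩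
        rcases hx with rfl | hx
        · exact Set.mem_insert _ _
        · rcases hy with rfl | hy
          · exact absurd hlt (hnb x (derivIter_subset o hx))
          · exact Set.mem_insert_of_mem _ ⟨hx, y, hy, hlt⟩
      · rintro (rfl | ⟨hx, y, hy, hlt⟩)
        · obtain ⟨y, hy⟩ := hA
          exact ⟨Set.mem_insert _ _, y, Set.mem_insert_of_mem _ hy,
            hb y (derivIter_subset o hy)⟩
        · exact ⟨Set.mem_insert_of_mem _ hx, y, Set.mem_insert_of_mem _ hy, hlt⟩
    | H₃ o ho ih =>
      intro hle
      rw [derivIter_limit ho, derivIter_limit ho]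
      ext x
      simp only [Set.mem_iInter]
      constructor
      · intro h
        by_cases hx : x = r
        · exact hx ▸ Set.mem_insert _ _
        · refine Set.mem_insert_of_mem _ (Set.mem_iInter₂.mpr fun o' ho' => ?_)
          have := h o' ho'
          rw [ih o' ho' (le_of_lt (lt_of_lt_of_le ho' hle))] at this
          rcases this with rfl | this
          · exact absurd rfl hx
          · exact this
      · intro h o' ho'
        rw [ih o' ho' (le_of_lt (lt_of_lt_of_le ho' hle))]
        rcases h with rfl | h
        · exact Set.mem_insert _ _
        · exact Set.mem_insert_of_mem _ (Set.mem_iInter₂.mp h o' ho')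
  have hata : derivIter lt (insert r S) a = {r} := by
    rw [key a le_rfl, derivIter_treeOrder hne]; ext x; simp
  refine treeOrder_eq ?_ ?_
  · rw [derivIter_succ, hata]
    ext x
    simp only [Set.mem_empty_iff_false, iff_false]
    rintro ⟨hx, y, hy, hlt⟩
    rw [Set.mem_singleton_iff] at hx hy
    subst hx; subst hy
    exact hirr hlt
  · intro γ hγ
    have hγa : γ ≤ a := Order.lt_succ_iff.mp hγ
    rw [key γ hγa]
    exact fun h => absurd (h ▸ Set.mem_insert r _) (Set.notMem_empty r)
end Root
section Aux

variable {σ : Type*} {lt le : σ → σ → Prop} {T S : Set σ}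

theorem TreeWF.subset (hwf : TreeWF lt T) (h : S ⊆ T) : TreeWF lt S := by
  rintro ⟨C, hC1, hC2, hC3⟩
  exact hwf ⟨C, hC1.trans h, hC2, hC3⟩

theorem IsAbsTree.subset (h : IsAbsTree le T) (hST : S ⊆ T) (hne : S.Nonempty) :
    IsAbsTree le S := by
  refine ⟨hne, (h.2.1).mono hST, fun x hx => ?_⟩
  obtain ⟨hfin, hlin⟩ := h.2.2 x (hST hx)
  exact ⟨hfin.subset fun y hy => ⟨hST hy.1, hy.2⟩,
    fun y hy h1 z hz h2 => hlin y (hST hy) h1 z (hST hz) h2⟩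

/-- minimum of a finite nonempty chain -/
theorem exists_min_of_finite_chain (htrans : ∀ a b c, le a b → le b c → le a c)
    (hrefl : ∀ a, le a a) (hfin : S.Finite) (hne : S.Nonempty)
    (hchain : ∀ a ∈ S, ∀ b ∈ S, le a b ∨ le b a) :
    ∃ z ∈ S, ∀ w ∈ S, le z w := by
  revert hne hchain
  refine Set.Finite.induction_on
    (motive := fun S _ => S.Nonempty → (∀ a ∈ S, ∀ b ∈ S, le a b ∨ le b a) →
      ∃ z ∈ S, ∀ w ∈ S, le z w) S hfin (fun h _ => absurd h (by simp)) ?_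
  intro a S' ha hfin ih hne hchain
  · rcases Set.eq_empty_or_nonempty S' with rfl | hne'
    · exact ⟨a, Set.mem_insert _ _, by
        rintro w (rfl | hw)
        · exact hrefl _
        · exact absurd hw (Set.notMem_empty w)⟩
    · obtain ⟨z, hz, hmin⟩ := ih hne' (fun a' ha' b hb => hchain a' (Set.mem_insert_of_mem _ ha')
        b (Set.mem_insert_of_mem _ hb))
      rcases hchain a (Set.mem_insert _ _) z (Set.mem_insert_of_mem _ hz) with h | h
      · refine ⟨a, Set.mem_insert _ _, ?_⟩
        rintro w (rfl | hw)
        · exact hrefl _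
        · exact htrans _ _ _ h (hmin w hw)
      · refine ⟨z, Set.mem_insert_of_mem _ hz, ?_⟩
        rintro w (rfl | hw)
        · exact h
        · exact hmin w hw

end Aux

section ListLemmas

theorem prefix_set_finite (x : List ℕ) : {y : List ℕ | y <+: x}.Finite := by
  have : {y : List ℕ | y <+: x} ⊆ Set.range (fun n : Fin (x.length + 1) => x.take n.1) := by
    intro y hy
    refine ⟨⟨y.length, by have := hy.length_le; omega⟩, ?_⟩
    exact (List.prefix_iff_eq_take.mp hy).symm
  exact (Set.finite_range _).subset this

theorem isAbsTree_of_lists {t : Set (List ℕ)} (hne : t.Nonempty) (hct : t.Countable) :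
    IsAbsTree (· <+: ·) t := by
  refine ⟨hne, hct, fun x hx => ?_⟩
  constructor
  · exact (prefix_set_finite x).subset fun y hy => hy.2.1
  · rintro y _ ⟨hy, _⟩ z _ ⟨hz, _⟩
    exact List.prefix_or_prefix_of_prefix hy hz

theorem strictOf_cons_iff (n : ℕ) (a b : List ℕ) :
    strictOf (· <+: ·) (n :: a) (n :: b) ↔ strictOf (· <+: ·) a b := by
  unfold strictOf
  simp only []
  rw [List.cons_prefix_cons]
  constructor
  · rintro ⟨⟨-, h1⟩, h2⟩
    exact ⟨h1, fun he => h2 (by rw [he])⟩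
  · rintro ⟨h1, h2⟩
    exact ⟨⟨rfl, h1⟩, fun he => h2 (by injection he)⟩

end ListLemmas
section Rank

variable {σ : Type*} {le : σ → σ → Prop} {T : Set σ}

/-- The up-set of `x` in `T`. -/
def upSet (le : σ → σ → Prop) (T : Set σ) (x : σ) : Set σ := T ∩ {z | le x z}

/-- The order of the up-set tree of `x`. -/
noncomputable def treeRank (le : σ → σ → Prop) (T : Set σ) (x : σ) : Ordinal.{0} :=
  treeOrder (strictOf le) (upSet le T x)

variable (hrefl : ∀ a, le a a) (htrans : ∀ a b c, le a b → le b c → le a c)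
  (hanti : ∀ a b, le a b → le b a → a = b)
  (hct : T.Countable) (hwf : TreeWF (strictOf le) T)

theorem upSet_eq (x : σ) : upSet le T x = T ∩ {z | le x z} := rfl

include htrans in
theorem upSet_upclosed (x : σ) :
    ∀ a b : σ, a ∈ {z | le x z} → strictOf le a b → b ∈ {z | le x z} :=
  fun a b ha hab => htrans _ _ _ ha hab.1

include htrans hanti hct hwf in
theorem upSet_exists_empty (x : σ) :
    ∃ o : Ordinal.{0}, derivIter (strictOf le) (upSet le T x) o = ∅ :=
  exists_derivIter_empty (strictOf_trans htrans hanti) strictOf_irrefl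
    (hct.mono Set.inter_subset_left) (hwf.subset Set.inter_subset_left)

include hrefl htrans hanti hct hwf in
theorem mem_derivIter_iff_rank {x : σ} (hx : x ∈ T) (γ : Ordinal.{0}) :
    x ∈ derivIter (strictOf le) T γ ↔ γ < treeRank le T x := by
  constructor
  · intro h
    rw [← not_le]
    intro hle
    have h1 : x ∈ derivIter (strictOf le) (upSet le T x) γ := by
      rw [upSet_eq, derivIter_inter_upclosed (upSet_upclosed htrans x)]
      exact ⟨h, hrefl x⟩
    rw [derivIter_empty_of_le (upSet_exists_empty htrans hanti hct hwf x) hle] at h1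
    exact h1
  · intro h
    have h3 : derivIter (strictOf le) (upSet le T x) γ ≠ ∅ :=
      fun he => absurd (treeOrder_le_of_empty he) (not_le.mpr h)
    obtain ⟨z, hz⟩ := Set.nonempty_iff_ne_empty.mpr h3
    rw [upSet_eq, derivIter_inter_upclosed (upSet_upclosed htrans x)] at hz
    exact mem_derivIter_of_le htrans hanti hx hz.2 γ hz.1

include htrans hanti hct hwf in
theorem treeRank_antitone {x y : σ} (hxy : le x y) :
    treeRank le T y ≤ treeRank le T x :=
  treeOrder_mono (fun z hz => ⟨hz.1, htrans _ _ _ hxy hz.2⟩)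
    (upSet_exists_empty htrans hanti hct hwf x)

include hrefl htrans hanti hct hwf in
theorem exists_gt_rank {m : σ} (hm : m ∈ T) {γ : Ordinal.{0}}
    (h : Order.succ γ < treeRank le T m) :
    ∃ y ∈ T, strictOf le m y ∧ γ < treeRank le T y := by
  have h0 := (mem_derivIter_iff_rank hrefl htrans hanti hct hwf hm (Order.succ γ)).mpr h
  rw [derivIter_succ] at h0
  obtain ⟨-, y, hy, hlt⟩ := h0
  have hyT := derivIter_subset _ hy
  exact ⟨y, hyT, hlt, (mem_derivIter_iff_rank hrefl htrans hanti hct hwf hyT γ).mp hy⟩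

end Rank
theorem minimal_tree_aux (α : Ordinal.{0}) :
    α.card ≤ Cardinal.aleph0 → 1 ≤ α →
    ∃ t : Set (List ℕ),
      IsAbsTree (· <+: ·) t ∧ TreeWF (strictOf (· <+: ·)) t ∧
      treeOrder (strictOf (· <+: ·)) t = α ∧
      ∀ (σ : Type u) (leS : σ → σ → Prop), IsPartialOrder σ leS →
        ∀ T : Set σ, IsAbsTree leS T → TreeWF (strictOf leS) T →
          α ≤ treeOrder (strictOf leS) T →
          ∃ T' : Set σ, T' ⊆ T ∧ TreeIso (· <+: ·) leS t T' := by
  induction α using Ordinal.induction with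
  | _ α IH =>
  intro hα h1
  have lpo : IsPartialOrder (List ℕ) (· <+: ·) := inferInstance
  have ltrans : ∀ a b c : List ℕ, a <+: b → b <+: c → a <+: c := fun a b c h h' => h.trans h'
  have lanti : ∀ a b : List ℕ, a <+: b → b <+: a → a = b :=
    fun a b h h' => h.eq_of_length_le h'.length_le
  rcases Ordinal.zero_or_succ_or_isSuccLimit α with rfl | ⟨β, rfl⟩ | hL
  · exact absurd h1 (by simp)
  · -- successor case
    rcases eq_or_ne β 0 with rfl | hβ0
    · -- base case α = 1
      refine ⟨{[]}, isAbsTree_of_lists ⟨[], rfl⟩ (Set.countable_singleton _), ?_, ?_, ?_⟩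
      · rintro ⟨S, hS1, hS2, -⟩
        exact hS2 ((Set.finite_singleton ([] : List ℕ)).subset hS1)
      · refine treeOrder_eq ?_ ?_
        · rw [derivIter_succ, derivIter_zero]
          ext x
          simp only [Set.mem_empty_iff_false, iff_false]
          rintro ⟨hx, y, hy, hlt⟩
          rw [Set.mem_singleton_iff] at hx hy
          subst hx; subst hy
          exact strictOf_irrefl _ hlt
        · intro γ hγ
          have hγ0 : γ = 0 := nonpos_iff_eq_zero.mp (Order.lt_succ_iff.mp hγ)
          rw [hγ0, derivIter_zero]
          exact fun h => absurd (h ▸ Set.mem_singleton ([] : List ℕ)) (Set.notMem_empty _)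
      · intro σ leS hpo T habs hwf hord
        obtain ⟨x0, hx0⟩ := habs.1
        refine ⟨{x0}, by simpa using hx0, fun _ => x0, ?_, ?_, ?_, ?_⟩
        · intro x hx; exact Set.mem_singleton _
        · intro y hy; exact ⟨[], Set.mem_singleton _, (Set.mem_singleton_iff.mp hy).symm⟩
        · intro a ha b hb _
          rw [Set.mem_singleton_iff] at ha hb; rw [ha, hb]
        · intro x hx y hy
          rw [Set.mem_singleton_iff] at hx hy
          subst hx; subst hy
          simp only [List.prefix_refl, true_iff]
          exact hpo.refl x0
    · -- successor case with 1 ≤ β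
      have hβ1 : 1 ≤ β := Ordinal.one_le_iff_ne_zero.mpr hβ0
      have hβlt : β < Order.succ β := Order.lt_succ β
      have hβcard : β.card ≤ Cardinal.aleph0 :=
        (Ordinal.card_le_card (Order.le_succ β)).trans hα
      obtain ⟨t, habs_t, hwf_t, hord_t, hmin_t⟩ := IH β hβlt hβcard hβ1
      have hne_t : ∃ o : Ordinal.{0}, derivIter (strictOf (· <+: ·)) t o = ∅ :=
        exists_derivIter_empty (strictOf_trans ltrans lanti) strictOf_irrefl habs_t.2.1 hwf_t
      set g : List ℕ → List ℕ := fun l => 0 :: l with hg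
      have hginj : Function.Injective g := fun a b h => by injection h
      have hgiff : ∀ a b : List ℕ, strictOf (· <+: ·) (g a) (g b) ↔ strictOf (· <+: ·) a b :=
        fun a b => strictOf_cons_iff 0 a b
      have himg : ∀ o : Ordinal.{0},
          derivIter (strictOf (· <+: ·)) (g '' t) o = g '' derivIter (strictOf (· <+: ·)) t o :=
        derivIter_image hginj hgiff
      set t' : Set (List ℕ) := insert [] (g '' t) with ht'
      have hnilim : ([] : List ℕ) ∉ g '' t := by rintro ⟨a, -, h⟩; exact List.cons_ne_nil 0 a h
      have hb : ∀ x ∈ g '' t, strictOf (· <+: ·) [] x := by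
        rintro x ⟨a, -, rfl⟩
        exact ⟨List.nil_prefix, fun h => List.cons_ne_nil 0 a h.symm⟩
      have hnb : ∀ x ∈ g '' t, ¬ strictOf (· <+: ·) x [] := by
        rintro x ⟨a, -, rfl⟩ ⟨h, -⟩
        exact List.cons_ne_nil 0 a (List.prefix_nil.mp h)
      have hemp_t : derivIter (strictOf (· <+: ·)) t β = ∅ := by
        have := derivIter_treeOrder hne_t
        rwa [hord_t] at this
      have hne_img : ∃ o : Ordinal.{0}, derivIter (strictOf (· <+: ·)) (g '' t) o = ∅ :=
        ⟨β, by rw [himg, hemp_t, Set.image_empty]⟩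
      have hord_img : treeOrder (strictOf (· <+: ·)) (g '' t) = β := by
        refine treeOrder_eq (by rw [himg, hemp_t, Set.image_empty]) ?_
        intro γ hγ h
        rw [himg, Set.image_eq_empty] at h
        exact absurd (hord_t ▸ treeOrder_le_of_empty h) (not_le.mpr hγ)
      have hord_t' : treeOrder (strictOf (· <+: ·)) t' = Order.succ β := by
        rw [ht', derivIter_insert_root (strictOf_irrefl _) hnilim hb hnb hne_img, hord_img]
      have hwf_t' : TreeWF (strictOf (· <+: ·)) t' := by
        rintro ⟨S, hS1, hS2, hS3⟩
        set S' : Set (List ℕ) := {l ∈ t | (0 :: l) ∈ S} with hS'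
        refine hwf_t ⟨S', fun l hl => hl.1, ?_, ?_⟩
        · intro hfin
          have : S ⊆ insert [] (g '' S') := by
            intro x hx
            rcases hS1 hx with rfl | ⟨a, ha, rfl⟩
            · exact Set.mem_insert _ _
            · exact Set.mem_insert_of_mem _ ⟨a, ⟨ha, hx⟩, rfl⟩
          exact hS2 (((hfin.image g).insert []).subset this)
        · intro x hx y hy hxy
          have hx' : (0 :: x) ∈ S := hx.2
          have hy' : (0 :: y) ∈ S := hy.2
          have := hS3 _ hx' _ hy' (fun h => hxy (by injection h))
          rcases this with h | h
          · exact Or.inl ((strictOf_cons_iff 0 x y).mp h)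
          · exact Or.inr ((strictOf_cons_iff 0 y x).mp h)
      have habs_t' : IsAbsTree (· <+: ·) t' :=
        isAbsTree_of_lists ⟨[], Set.mem_insert _ _⟩
          ((habs_t.2.1.image g).insert [])
      refine ⟨t', habs_t', hwf_t', hord_t', ?_⟩
      intro σ leS hpo T habs hwf hord
      have hrefl : ∀ a : σ, leS a a := fun a => hpo.refl a
      have htrans : ∀ a b c : σ, leS a b → leS b c → leS a c := fun a b c => hpo.trans a b c
      have hanti : ∀ a b : σ, leS a b → leS b a → a = b := fun a b => hpo.antisymm a b
      have hneT : ∃ o : Ordinal.{0}, derivIter (strictOf leS) T o = ∅ :=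
        exists_derivIter_empty (strictOf_trans htrans hanti) strictOf_irrefl habs.2.1 hwf
      have hd : (derivIter (strictOf leS) T β).Nonempty := by
        rw [Set.nonempty_iff_ne_empty]
        intro h
        exact absurd (treeOrder_le_of_empty h) (not_le.mpr (lt_of_lt_of_le hβlt hord))
      obtain ⟨x0, hx0⟩ := hd
      have hx0T : x0 ∈ T := derivIter_subset _ hx0
      set U : Set σ := {z | strictOf leS x0 z} with hU
      have hUup : ∀ a b : σ, a ∈ U → strictOf leS a b → b ∈ U :=
        fun a b ha hab => strictOf_trans htrans hanti _ _ _ ha hab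
      set T₁ : Set σ := T ∩ U with hT₁
      have hT₁d : ∀ γ < β, (derivIter (strictOf leS) T₁ γ).Nonempty := by
        intro γ hγ
        have hx0' : x0 ∈ derivIter (strictOf leS) T (Order.succ γ) :=
          derivIter_antitone (Order.succ_le_of_lt hγ) hx0
        rw [derivIter_succ] at hx0'
        obtain ⟨-, y, hy, hlt⟩ := hx0'
        exact ⟨y, by rw [hT₁, derivIter_inter_upclosed hUup]; exact ⟨hy, hlt⟩⟩
      have hT₁ne : T₁.Nonempty := by
        have := hT₁d 0 (lt_of_lt_of_le zero_lt_one hβ1)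
        rwa [derivIter_zero] at this
      have hT₁wf : TreeWF (strictOf leS) T₁ := hwf.subset Set.inter_subset_left
      have hT₁ne' : ∃ o : Ordinal.{0}, derivIter (strictOf leS) T₁ o = ∅ :=
        exists_derivIter_empty (strictOf_trans htrans hanti) strictOf_irrefl
          (habs.2.1.mono Set.inter_subset_left) hT₁wf
      have hT₁ord : β ≤ treeOrder (strictOf leS) T₁ :=
        le_treeOrder hT₁ne' fun γ hγ => Set.nonempty_iff_ne_empty.mp (hT₁d γ hγ)
      obtain ⟨T'', hT''sub, f, hf1, hf2, hf3, hf4⟩ :=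
        hmin_t σ leS hpo T₁ (habs.subset Set.inter_subset_left hT₁ne) hT₁wf hT₁ord
      have hT''x0 : ∀ z ∈ T'', strictOf leS x0 z := fun z hz => (hT''sub hz).2
      set f' : List ℕ → σ := fun l => match l with | [] => x0 | _ :: m => f m with hf'
      refine ⟨insert x0 T'', ?_, f', ?_, ?_, ?_, ?_⟩
      · rintro z (rfl | hz)
        · exact hx0T
        · exact (hT''sub hz).1
      · rintro x (rfl | ⟨a, ha, rfl⟩)
        · exact Set.mem_insert _ _
        · exact Set.mem_insert_of_mem _ (hf1 a ha)
      · rintro y (rfl | hy)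
        · exact ⟨[], Set.mem_insert _ _, rfl⟩
        · obtain ⟨a, ha, rfl⟩ := hf2 y hy
          exact ⟨0 :: a, Set.mem_insert_of_mem _ ⟨a, ha, rfl⟩, rfl⟩
      · rintro x (rfl | ⟨a, ha, rfl⟩) y (rfl | ⟨b, hb, rfl⟩) he
        · rfl
        · exact absurd (he : x0 = f b) (hT''x0 _ (hf1 b hb)).2
        · exact absurd ((he : f a = x0).symm) (hT''x0 _ (hf1 a ha)).2
        · have : a = b := hf3 ha hb he
          rw [this]
      · rintro x (rfl | ⟨a, ha, rfl⟩) y (rfl | ⟨b, hb, rfl⟩)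
        · show ([] : List ℕ) <+: [] ↔ leS x0 x0
          simpa using hrefl x0
        · show ([] : List ℕ) <+: (0 :: b) ↔ leS x0 (f b)
          simp only [List.nil_prefix, true_iff]
          exact (hT''x0 _ (hf1 b hb)).1
        · show (0 :: a) <+: [] ↔ leS (f a) x0
          constructor
          · intro h
            exact absurd (List.prefix_nil.mp h) (List.cons_ne_nil 0 a)
          · intro h
            have h1 := hT''x0 _ (hf1 a ha)
            exact absurd (hanti _ _ h1.1 h) h1.2
        · show (0 :: a) <+: (0 :: b) ↔ leS (f a) (f b)
          rw [List.cons_prefix_cons]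
          simp only [true_and]
          exact hf4 a ha b hb
  · -- limit case
    have hα0 : (0 : Ordinal.{0}) < α := lt_of_lt_of_le zero_lt_one h1
    have h1α : (1 : Ordinal.{0}) < α := lt_of_lt_of_le Ordinal.one_lt_omega0 (Ordinal.omega0_le_of_isSuccLimit hL)
    have hctIio : (Set.Iio α).Countable := by
      rw [← Cardinal.le_aleph0_iff_set_countable, Ordinal.mk_Iio_ordinal]
      calc Cardinal.lift.{1} α.card ≤ Cardinal.lift.{1} Cardinal.aleph0 := Cardinal.lift_le.mpr hα
      _ = Cardinal.aleph0 := Cardinal.lift_aleph0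
    obtain ⟨e, he⟩ := hctIio.exists_eq_range ⟨0, hα0⟩
    set β : ℕ → Ordinal.{0} := fun n => max (e n) 1 with hβ
    have heβ : ∀ n, e n < α := fun n => by
      have : e n ∈ Set.Iio α := he ▸ Set.mem_range_self n
      exact this
    have hβlt : ∀ n, β n < α := fun n => max_lt (heβ n) h1α
    have hβ1 : ∀ n, 1 ≤ β n := fun n => le_max_right _ _
    have hβcof : ∀ o : Ordinal.{0}, (∀ n, β n ≤ o) → α ≤ o := by
      intro o ho
      by_contra hc
      have hso : Order.succ o ∈ Set.Iio α := hL.succ_lt (not_le.mp hc)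
      rw [he] at hso
      obtain ⟨n, hn⟩ := hso
      have h2 : e n ≤ o := le_trans (le_max_left _ _) (ho n)
      rw [hn] at h2
      exact absurd h2 (not_le.mpr (Order.lt_succ o))
    have hβcard : ∀ n, (β n).card ≤ Cardinal.aleph0 :=
      fun n => (Ordinal.card_le_card (hβlt n).le).trans hα
    choose tt htabs htwf htord htmin using fun n => IH (β n) (hβlt n) (hβcard n) (hβ1 n)
    set t : Set (List ℕ) := ⋃ n, (fun l => n :: l) '' tt n with ht
    have hcons : ∀ n : ℕ, Function.Injective (fun l : List ℕ => n :: l) := by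
      intro n a b h
      injection h
    have hconsiff : ∀ (n : ℕ) (a b : List ℕ),
        strictOf (· <+: ·) (n :: a) (n :: b) ↔ strictOf (· <+: ·) a b :=
      fun n a b => strictOf_cons_iff n a b
    have hdisj : ∀ n m : ℕ, n ≠ m → ∀ x : List ℕ,
        x ∈ (fun l => n :: l) '' tt n → x ∉ (fun l => m :: l) '' tt m := by
      rintro n m hnm x ⟨a, -, rfl⟩ ⟨b, -, hb⟩
      injection hb with h1 h2
      exact hnm h1.symm
    have hcross : ∀ n m : ℕ, n ≠ m → ∀ x ∈ (fun l => n :: l) '' tt n,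
        ∀ y ∈ (fun l => m :: l) '' tt m, ¬ strictOf (· <+: ·) x y := by
      rintro n m hnm x ⟨a, -, rfl⟩ y ⟨b, -, rfl⟩ ⟨hp, -⟩
      rw [List.cons_prefix_cons] at hp
      exact hnm hp.1
    have himg : ∀ (n : ℕ) (o : Ordinal.{0}),
        derivIter (strictOf (· <+: ·)) ((fun l => n :: l) '' tt n) o
          = (fun l => n :: l) '' derivIter (strictOf (· <+: ·)) (tt n) o :=
      fun n => derivIter_image (hcons n) (hconsiff n)
    have hne_tt : ∀ n, ∃ o : Ordinal.{0}, derivIter (strictOf (· <+: ·)) (tt n) o = ∅ :=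
      fun n => exists_derivIter_empty (strictOf_trans ltrans lanti) strictOf_irrefl
        (htabs n).2.1 (htwf n)
    have hderiv : ∀ o : Ordinal.{0}, derivIter (strictOf (· <+: ·)) t o
        = ⋃ n, (fun l => n :: l) '' derivIter (strictOf (· <+: ·)) (tt n) o := by
      intro o
      rw [ht, derivIter_iUnion hdisj hcross o]
      exact Set.iUnion_congr fun n => himg n o
    have hemp_iff : ∀ o : Ordinal.{0},
        derivIter (strictOf (· <+: ·)) t o = ∅ ↔ α ≤ o := by
      intro o
      rw [hderiv o]
      constructor
      · intro h
        refine hβcof o fun n => ?_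
        have h2 : (fun l => n :: l) '' derivIter (strictOf (· <+: ·)) (tt n) o = ∅ := by
          refine Set.eq_empty_of_subset_empty ?_
          intro z hz
          rw [← h]
          exact Set.mem_iUnion.mpr ⟨n, hz⟩
        rw [Set.image_eq_empty] at h2
        exact (htord n) ▸ treeOrder_le_of_empty h2
      · intro h
        have : ∀ n, derivIter (strictOf (· <+: ·)) (tt n) o = ∅ := fun n =>
          derivIter_empty_of_le (hne_tt n) (le_trans (le_of_eq (htord n)) ((hβlt n).le.trans h))
        simp [this]
    have hord_t : treeOrder (strictOf (· <+: ·)) t = α := by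
      unfold treeOrder
      have : {o : Ordinal.{0} | derivIter (strictOf (· <+: ·)) t o = ∅} = Set.Ici α := by
        ext o; exact hemp_iff o
      rw [this, csInf_Ici]
    have habs_t : IsAbsTree (· <+: ·) t := by
      refine isAbsTree_of_lists ⟨0 :: (htabs 0).1.choose, Set.mem_iUnion.mpr
        ⟨0, (htabs 0).1.choose, (htabs 0).1.choose_spec, rfl⟩⟩ ?_
      exact Set.countable_iUnion fun n => ((htabs n).2.1).image _
    have hwf_t : TreeWF (strictOf (· <+: ·)) t := by
      rintro ⟨S, hS1, hS2, hS3⟩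
      obtain ⟨s, hs⟩ := hS2.nonempty
      have hmem : ∀ x ∈ S, ∃ m b, b ∈ tt m ∧ x = m :: b := by
        intro x hx
        obtain ⟨m, hm⟩ := Set.mem_iUnion.mp (hS1 hx)
        obtain ⟨b, hb, hbe⟩ := hm
        exact ⟨m, b, hb, hbe.symm⟩
      obtain ⟨n, a, ha, hsa⟩ := hmem s hs
      have hhead : ∀ x ∈ S, ∃ b ∈ tt n, x = n :: b := by
        intro x hx
        obtain ⟨m, b, hb, rfl⟩ := hmem x hx
        rcases eq_or_ne (m :: b) s with he | hne
        · rw [hsa] at he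
          injection he with h1 h2
          subst h1
          exact ⟨b, hb, rfl⟩
        · rcases hS3 _ hx _ hs hne with h | h
          · have h2 := h.1
            rw [hsa, List.cons_prefix_cons] at h2
            obtain ⟨h3, -⟩ := h2
            subst h3
            exact ⟨b, hb, rfl⟩
          · have h2 := h.1
            rw [hsa, List.cons_prefix_cons] at h2
            obtain ⟨h3, -⟩ := h2
            subst h3
            exact ⟨b, hb, rfl⟩
      set S' : Set (List ℕ) := {l ∈ tt n | (n :: l) ∈ S} with hS'
      refine htwf n ⟨S', fun l hl => hl.1, ?_, ?_⟩
      · intro hfin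
        refine hS2 (((hfin.image (fun l => n :: l))).subset ?_)
        intro x hx
        obtain ⟨b, hb, rfl⟩ := hhead x hx
        exact ⟨b, ⟨hb, hx⟩, rfl⟩
      · intro x hx y hy hxy
        have := hS3 _ hx.2 _ hy.2 (fun h => hxy (by injection h))
        rcases this with h | h
        · exact Or.inl ((strictOf_cons_iff n x y).mp h)
        · exact Or.inr ((strictOf_cons_iff n y x).mp h)
    refine ⟨t, habs_t, hwf_t, hord_t, ?_⟩
    intro σ leS hpo T habs hwf hord
    have hrefl : ∀ a : σ, leS a a := fun a => hpo.refl a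
    have htrans : ∀ a b c : σ, leS a b → leS b c → leS a c := fun a b c => hpo.trans a b c
    have hanti : ∀ a b : σ, leS a b → leS b a → a = b := fun a b => hpo.antisymm a b
    have hst := strictOf_trans htrans hanti
    set r : σ → Ordinal.{0} := treeRank leS T with hrdef
    have hcof0 : ∀ γ < α, ∃ x ∈ T, γ < r x := by
      intro γ hγ
      have hne : (derivIter (strictOf leS) T γ).Nonempty := by
        rw [Set.nonempty_iff_ne_empty]
        intro h
        exact absurd (treeOrder_le_of_empty h) (not_le.mpr (lt_of_lt_of_le hγ hord))
      obtain ⟨x, hx⟩ := hne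
      exact ⟨x, derivIter_subset _ hx,
        (mem_derivIter_iff_rank hrefl htrans hanti habs.2.1 hwf (derivIter_subset _ hx) γ).mp hx⟩
    obtain ⟨V, hVT, hVpair, hVcof, hVbd⟩ :
        ∃ V : Set σ, V ⊆ T ∧ (∀ z ∈ V, ∀ z' ∈ V, z ≠ z' → ¬ leS z z') ∧
          (∀ γ < α, ∃ z ∈ V, γ < r z) ∧ (∀ z ∈ V, r z < α) := by
      by_cases hM : ({x ∈ T | α ≤ r x}).Nonempty
      · obtain ⟨m, hm, hmax⟩ := exists_maximal_of_treeWF hst strictOf_irrefl hwf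
          (fun x hx => hx.1) hM
        refine ⟨{z ∈ T | strictOf leS m z ∧ ∀ w ∈ T, strictOf leS m w → leS w z → w = z},
          fun z hz => hz.1, ?_, ?_, ?_⟩
        · rintro z ⟨hzT, hmz, hzmin⟩ z' ⟨hz'T, hmz', hz'min⟩ hne hle
          exact hne (hz'min z hzT hmz hle)
        · intro γ hγ
          have hsγ : Order.succ γ < r m := lt_of_lt_of_le (hL.succ_lt hγ) hm.2
          obtain ⟨y, hyT, hmy, hγy⟩ :=
            exists_gt_rank hrefl htrans hanti habs.2.1 hwf hm.1 hsγ
          set B := {w ∈ T | strictOf leS m w ∧ leS w y} with hB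
          have hBfin : B.Finite := by
            refine (((habs.2.2 y hyT).1).union (Set.finite_singleton y)).subset ?_
            rintro w ⟨hwT, hmw, hwy⟩
            rcases eq_or_ne w y with rfl | hne
            · exact Or.inr rfl
            · exact Or.inl ⟨hwT, hwy, hne⟩
          have hBne : B.Nonempty := ⟨y, hyT, hmy, hrefl y⟩
          have hBchain : ∀ a ∈ B, ∀ b ∈ B, leS a b ∨ leS b a := by
            rintro a ⟨haT, -, hay⟩ b ⟨hbT, -, hby⟩
            rcases eq_or_ne a y with rfl | hany
            · exact Or.inr hby
            rcases eq_or_ne b y with rfl | hbny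
            · exact Or.inl hay
            exact (habs.2.2 y hyT).2 a haT ⟨hay, hany⟩ b hbT ⟨hby, hbny⟩
          obtain ⟨z, hzB, hzmin⟩ := exists_min_of_finite_chain htrans hrefl hBfin hBne hBchain
          refine ⟨z, ⟨hzB.1, hzB.2.1, ?_⟩, ?_⟩
          · intro w hwT hmw hwz
            exact (hanti _ _ (hzmin w ⟨hwT, hmw, htrans _ _ _ hwz hzB.2.2⟩) hwz).symm
          · exact lt_of_lt_of_le hγy (treeRank_antitone htrans hanti habs.2.1 hwf hzB.2.2)
        · rintro z ⟨hzT, hmz, -⟩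
          by_contra hc
          exact hmax z ⟨hzT, not_lt.mp hc⟩ hmz
      · rw [Set.not_nonempty_iff_eq_empty] at hM
        have hMlt : ∀ z ∈ T, r z < α := fun z hz => lt_of_not_ge fun hc =>
          Set.eq_empty_iff_forall_notMem.mp hM z ⟨hz, hc⟩
        refine ⟨{z ∈ T | ∀ w ∈ T, leS w z → w = z}, fun z hz => hz.1, ?_, ?_,
          fun z hz => hMlt z hz.1⟩
        · rintro z ⟨hzT, hzmin⟩ z' ⟨hz'T, hz'min⟩ hne hle
          exact hne (hz'min z hzT hle)
        · intro γ hγ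
          obtain ⟨y, hyT, hγy⟩ := hcof0 γ hγ
          set B := {w ∈ T | leS w y} with hB
          have hBfin : B.Finite := by
            refine (((habs.2.2 y hyT).1).union (Set.finite_singleton y)).subset ?_
            rintro w ⟨hwT, hwy⟩
            rcases eq_or_ne w y with rfl | hne
            · exact Or.inr rfl
            · exact Or.inl ⟨hwT, hwy, hne⟩
          have hBne : B.Nonempty := ⟨y, hyT, hrefl y⟩
          have hBchain : ∀ a ∈ B, ∀ b ∈ B, leS a b ∨ leS b a := by
            rintro a ⟨haT, hay⟩ b ⟨hbT, hby⟩
            rcases eq_or_ne a y with rfl | hany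
            · exact Or.inr hby
            rcases eq_or_ne b y with rfl | hbny
            · exact Or.inl hay
            exact (habs.2.2 y hyT).2 a haT ⟨hay, hany⟩ b hbT ⟨hby, hbny⟩
          obtain ⟨z, hzB, hzmin⟩ := exists_min_of_finite_chain htrans hrefl hBfin hBne hBchain
          refine ⟨z, ⟨hzB.1, fun w hwT hwz =>
            (hanti _ _ (hzmin w ⟨hwT, htrans _ _ _ hwz hzB.2⟩) hwz).symm⟩, ?_⟩
          exact lt_of_lt_of_le hγy (treeRank_antitone htrans hanti habs.2.1 hwf hzB.2)
    -- choose the incomparable sequence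
    obtain ⟨x0σ, hx0σ⟩ := habs.1
    have hcofd : ∀ γ : Ordinal.{0}, ∃ z, γ < α → z ∈ V ∧ γ < r z := by
      intro γ
      by_cases h : γ < α
      · obtain ⟨z, h1, h2⟩ := hVcof γ h
        exact ⟨z, fun _ => ⟨h1, h2⟩⟩
      · exact ⟨x0σ, fun hh => absurd hh h⟩
    choose c hc using hcofd
    set G : ℕ → Ordinal.{0} :=
      fun n => Nat.rec (β 0) (fun k Gk => max (β (k+1)) (Order.succ (r (c Gk)))) n with hG
    have hG0 : G 0 = β 0 := rfl
    have hGsucc : ∀ n, G (n+1) = max (β (n+1)) (Order.succ (r (c (G n)))) := fun n => rfl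
    have hGlt : ∀ n, G n < α := by
      intro n
      induction n with
      | zero => exact hβlt 0
      | succ k ih =>
        rw [hGsucc k]
        exact max_lt (hβlt (k+1)) (hL.succ_lt (hVbd _ (hc (G k) ih).1))
    have hGβ : ∀ n, β n ≤ G n := by
      intro n
      cases n with
      | zero => exact le_rfl
      | succ k => rw [hGsucc k]; exact le_max_left _ _
    set xx : ℕ → σ := fun n => c (G n) with hxx
    have hxV : ∀ n, xx n ∈ V := fun n => (hc (G n) (hGlt n)).1
    have hxr : ∀ n, G n < r (xx n) := fun n => (hc (G n) (hGlt n)).2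
    have hrsm : StrictMono (fun n => r (xx n)) := by
      refine strictMono_nat_of_lt_succ fun n => ?_
      calc r (xx n) < Order.succ (r (xx n)) := Order.lt_succ _
        _ ≤ G (n+1) := by rw [hGsucc n]; exact le_max_right _ _
        _ < r (xx (n+1)) := hxr (n+1)
    have hxinj : ∀ n m : ℕ, n ≠ m → xx n ≠ xx m := by
      intro n m hnm he
      have : r (xx n) ≠ r (xx m) := by
        rcases Nat.lt_or_ge n m with h | h
        · exact ne_of_lt (hrsm h)
        · exact ne_of_gt (hrsm (by omega))
      exact this (by rw [he])
    have hβr : ∀ n, β n ≤ r (xx n) := fun n => (hGβ n).trans (hxr n).le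
    have hxT : ∀ n, xx n ∈ T := fun n => hVT (hxV n)
    have hiso : ∀ n : ℕ, ∃ T' : Set σ, T' ⊆ upSet leS T (xx n) ∧
        TreeIso (· <+: ·) leS (tt n) T' := by
      intro n
      have hsub : upSet leS T (xx n) ⊆ T := Set.inter_subset_left
      have hne : (upSet leS T (xx n)).Nonempty := ⟨xx n, hxT n, hrefl _⟩
      exact htmin n σ leS hpo (upSet leS T (xx n)) (habs.subset hsub hne)
        (hwf.subset hsub) (hβr n)
    choose Tn' hTn'sub hTn'iso using hiso
    choose fb hb1 hb2 hb3 hb4 using hTn'iso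
    have hcrossS : ∀ i j : ℕ, i ≠ j → ∀ u ∈ Tn' i, ∀ v ∈ Tn' j, ¬ leS u v := by
      intro i j hij u hu v hv hle
      have hui : leS (xx i) u := (hTn'sub i hu).2
      have hvj : leS (xx j) v := (hTn'sub j hv).2
      have hvT : v ∈ T := (hTn'sub j hv).1
      have hxiv : leS (xx i) v := htrans _ _ _ hui hle
      have hxixj : leS (xx i) (xx j) ∨ leS (xx j) (xx i) := by
        rcases eq_or_ne (xx i) v with he1 | h1
        · exact Or.inr (he1 ▸ hvj)
        rcases eq_or_ne (xx j) v with he2 | h2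
        · exact Or.inl (he2 ▸ hxiv)
        · exact (habs.2.2 v hvT).2 _ (hxT i) ⟨hxiv, h1⟩ _ (hxT j) ⟨hvj, h2⟩
      rcases hxixj with h | h
      · exact hVpair _ (hxV i) _ (hxV j) (hxinj i j hij) h
      · exact hVpair _ (hxV j) _ (hxV i) (hxinj j i (Ne.symm hij)) h
    have hmemt : ∀ p ∈ t, ∃ n a, a ∈ tt n ∧ p = n :: a := by
      intro p hp
      rw [ht] at hp
      obtain ⟨n, hn⟩ := Set.mem_iUnion.mp hp
      obtain ⟨a, ha, hae⟩ := hn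
      exact ⟨n, a, ha, hae.symm⟩
    refine ⟨⋃ n, Tn' n, ?_,
      (fun l => match l with | [] => x0σ | n :: m => fb n m), ?_, ?_, ?_, ?_⟩
    · intro z hz
      obtain ⟨n, hn⟩ := Set.mem_iUnion.mp hz
      exact (hTn'sub n hn).1
    · intro p hp
      obtain ⟨n, a, ha, rfl⟩ := hmemt p hp
      exact Set.mem_iUnion.mpr ⟨n, hb1 n a ha⟩
    · intro y hy
      obtain ⟨n, hn⟩ := Set.mem_iUnion.mp hy
      obtain ⟨a, ha, hae⟩ := hb2 n y hn
      refine ⟨n :: a, ?_, hae⟩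
      rw [ht]
      exact Set.mem_iUnion.mpr ⟨n, a, ha, rfl⟩
    · intro p hp q hq he
      obtain ⟨n, a, ha, rfl⟩ := hmemt p hp
      obtain ⟨m, b, hb, rfl⟩ := hmemt q hq
      rcases eq_or_ne n m with rfl | hnm
      · have he' : fb n a = fb n b := he
        rw [hb3 n ha hb he']
      · exfalso
        have he' : fb n a = fb m b := he
        have hle : leS (fb n a) (fb m b) := by rw [he']; exact hrefl _
        exact hcrossS n m hnm _ (hb1 n a ha) _ (hb1 m b hb) hle
    · intro p hp q hq
      obtain ⟨n, a, ha, rfl⟩ := hmemt p hp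
      obtain ⟨m, b, hb, rfl⟩ := hmemt q hq
      rcases eq_or_ne n m with rfl | hnm
      · show (n :: a <+: n :: b) ↔ leS (fb n a) (fb n b)
        rw [List.cons_prefix_cons]
        simp only [true_and]
        exact hb4 n a ha b hb
      · show (n :: a <+: m :: b) ↔ leS (fb n a) (fb m b)
        constructor
        · intro h
          rw [List.cons_prefix_cons] at h
          exact absurd h.1 hnm
        · intro h
          exact absurd h (hcrossS n m hnm _ (hb1 n a ha) _ (hb1 m b hb))

/-- **Minimal trees.** For every countable ordinal `α ≥ 1` there is a well-founded tree `t`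
with `o(t) = α` which is minimal of order `α`: every well-founded tree `T` with
`o(T) ≥ α` contains a subtree isomorphic to `t`. -/
theorem exists_minimal_tree (α : Ordinal.{0}) (hα : α.card ≤ Cardinal.aleph0)
    (h1 : 1 ≤ α) :
    ∃ (τ : Type) (leT : τ → τ → Prop) (t : Set τ),
      IsPartialOrder τ leT ∧ IsAbsTree leT t ∧ TreeWF (strictOf leT) t ∧
      treeOrder (strictOf leT) t = α ∧
      ∀ (σ : Type u) (leS : σ → σ → Prop), IsPartialOrder σ leS →
        ∀ T : Set σ, IsAbsTree leS T → TreeWF (strictOf leS) T →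
          α ≤ treeOrder (strictOf leS) T →
          ∃ T' : Set σ, T' ⊆ T ∧ TreeIso leT leS t T' := by
  obtain ⟨t, habs, hwf, hord, hmin⟩ := minimal_tree_aux α hα h1
  exact ⟨List ℕ, (· <+: ·), t, inferInstance, habs, hwf, hord, hmin⟩
end

section
/- Let α be a countable limit ordinal and let T be a countable well-founded tree with o(T) = α. Then there exist a sequence (αₙ) of successor ordinals and a sequence (tₙ) of subtrees tₙ ⊆ T such that α = supₙ αₙ, o(tₙ) = αₙ for every n, T = ⋃ₙ tₙ, and the trees (tₙ) are mutually incomparable, i.e. if x ∈ tₙ and y ∈ tₘ with n ≠ m, then x and y are incomparable in T. -/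
universe u v

open Ordinal

section AuxLTD
variable {σ : Type u} (lt : σ → σ → Prop)

lemma LTD.dI_zero (T : Set σ) : derivIter lt T 0 = T := Ordinal.limitRecOn_zero (motive := fun _ => Set σ) _ _ _

lemma LTD.dI_succ (T : Set σ) (γ : Ordinal) :
    derivIter lt T (γ + 1) = derivSet lt (derivIter lt T γ) :=
  Ordinal.limitRecOn_add_one (motive := fun _ => Set σ) _ _ _ _

lemma LTD.dI_limit (T : Set σ) {γ : Ordinal} (h : Order.IsSuccLimit γ) :
    derivIter lt T γ = ⋂ (γ' : Ordinal) (_ : γ' < γ), derivIter lt T γ' :=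
  Ordinal.limitRecOn_limit (motive := fun _ => Set σ) _ _ _ _ h

variable {lt}

lemma LTD.dI_mono {S T : Set σ} (hST : S ⊆ T) :
    ∀ γ : Ordinal, derivIter lt S γ ⊆ derivIter lt T γ := by
  intro γ
  induction γ using Ordinal.limitRecOn with
  | zero => rw [LTD.dI_zero, LTD.dI_zero]; exact hST
  | add_one γ ih =>
    rw [LTD.dI_succ, LTD.dI_succ]
    rintro x ⟨hx, y, hy, hxy⟩
    exact ⟨ih hx, y, ih hy, hxy⟩
  | limit γ hγ ih =>
    rw [LTD.dI_limit lt S hγ, LTD.dI_limit lt T hγ]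
    intro x hx
    simp only [Set.mem_iInter] at hx ⊢
    exact fun γ' h' => ih γ' h' (hx γ' h')

lemma LTD.dI_subset (T : Set σ) : ∀ γ : Ordinal, derivIter lt T γ ⊆ T := by
  intro γ
  induction γ using Ordinal.limitRecOn with
  | zero => rw [LTD.dI_zero]
  | add_one γ ih => rw [LTD.dI_succ]; exact fun x hx => ih hx.1
  | limit γ hγ ih =>
    rw [LTD.dI_limit lt T hγ]
    intro x hx
    simp only [Set.mem_iInter] at hx
    exact ih 0 hγ.pos (hx 0 hγ.pos)

lemma LTD.dI_downward (T : Set σ) : ∀ γ : Ordinal, ∀ y ∈ derivIter lt T γ,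
    ∀ x ∈ T, lt x y → x ∈ derivIter lt T γ := by
  intro γ
  induction γ using Ordinal.limitRecOn with
  | zero => intro y _ x hx _; rwa [LTD.dI_zero]
  | add_one γ ih =>
    rw [LTD.dI_succ]
    rintro y ⟨hy, z, hz, hyz⟩ x hx hxy
    exact ⟨ih y hy x hx hxy, y, hy, hxy⟩
  | limit γ hγ ih =>
    rw [LTD.dI_limit lt T hγ]
    intro y hy x hx hxy
    simp only [Set.mem_iInter] at hy ⊢
    exact fun γ' h' => ih γ' h' y (hy γ' h') x hx hxy

lemma LTD.dI_empty_mono {T : Set σ} {γ : Ordinal} (h : derivIter lt T γ = ∅) :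
    ∀ δ : Ordinal, γ ≤ δ → derivIter lt T δ = ∅ := by
  intro δ
  induction δ using Ordinal.limitRecOn with
  | zero => intro hδ; rwa [nonpos_iff_eq_zero.mp hδ] at h
  | add_one δ ih =>
    intro hδ
    rcases Order.le_succ_iff_eq_or_le.mp hδ with rfl | hle
    · exact h
    · rw [LTD.dI_succ, ih hle]
      simp [derivSet]
  | limit δ hδ ih =>
    intro hle
    rcases eq_or_lt_of_le hle with rfl | hlt
    · exact h
    · rw [LTD.dI_limit lt T hδ]
      apply Set.eq_empty_of_subset_empty
      intro x hx
      simp only [Set.mem_iInter] at hx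
      rw [← h]
      exact hx γ hlt

lemma LTD.dI_iUnion {ι : Type v} (t : ι → Set σ)
    (hd : ∀ i j, i ≠ j → ∀ x ∈ t i, ∀ y ∈ t j, x ≠ y ∧ ¬ lt x y) :
    ∀ γ : Ordinal, derivIter lt (⋃ i, t i) γ = ⋃ i, derivIter lt (t i) γ := by
  intro γ
  induction γ using Ordinal.limitRecOn with
  | zero => simp only [LTD.dI_zero]
  | add_one γ ih =>
    rw [LTD.dI_succ, ih]
    ext x
    constructor
    · rintro ⟨hx, y, hy, hxy⟩
      rw [Set.mem_iUnion] at hx hy ⊢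
      obtain ⟨i, hxi⟩ := hx
      obtain ⟨j, hyj⟩ := hy
      have hij : i = j := by
        by_contra hne
        exact (hd i j hne x (LTD.dI_subset _ _ hxi) y (LTD.dI_subset _ _ hyj)).2 hxy
      subst hij
      exact ⟨i, by rw [LTD.dI_succ]; exact ⟨hxi, y, hyj, hxy⟩⟩
    · intro hx
      rw [Set.mem_iUnion] at hx
      obtain ⟨i, hxi⟩ := hx
      rw [LTD.dI_succ] at hxi
      obtain ⟨hxi, y, hy, hxy⟩ := hxi
      exact ⟨Set.mem_iUnion.mpr ⟨i, hxi⟩, y, Set.mem_iUnion.mpr ⟨i, hy⟩, hxy⟩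
  | limit γ hγ ih =>
    ext x
    rw [LTD.dI_limit lt _ hγ]
    simp only [Set.mem_iInter, Set.mem_iUnion]
    constructor
    · intro hx
      have h0 := hx 0 hγ.pos
      rw [ih 0 hγ.pos, Set.mem_iUnion] at h0
      obtain ⟨i, hxi⟩ := h0
      rw [LTD.dI_zero] at hxi
      refine ⟨i, ?_⟩
      rw [LTD.dI_limit lt _ hγ]
      simp only [Set.mem_iInter]
      intro γ' h'
      have := hx γ' h'
      rw [ih γ' h', Set.mem_iUnion] at this
      obtain ⟨j, hxj⟩ := this
      have hij : i = j := by
        by_contra hne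
        exact (hd i j hne x hxi x (LTD.dI_subset _ _ hxj)).1 rfl
      subst hij
      exact hxj
    · rintro ⟨i, hxi⟩ γ' h'
      rw [LTD.dI_limit lt _ hγ] at hxi
      simp only [Set.mem_iInter] at hxi
      rw [ih γ' h', Set.mem_iUnion]
      exact ⟨i, hxi γ' h'⟩

lemma LTD.dI_root {T : Set σ} {r : σ} (hr : r ∈ T)
    (hroot : ∀ y ∈ T, y ≠ r → lt r y) {γ : Ordinal}
    (hne : (derivIter lt T γ).Nonempty) : r ∈ derivIter lt T γ := by
  obtain ⟨y, hy⟩ := hne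
  rcases eq_or_ne y r with rfl | hyr
  · exact hy
  · exact LTD.dI_downward T γ y hy r hr (hroot y (LTD.dI_subset T γ hy) hyr)

lemma LTD.treeOrder_spec {T : Set σ} (h : ∃ γ, derivIter lt T γ = ∅) :
    derivIter lt T (treeOrder lt T) = ∅ := csInf_mem h

lemma LTD.lt_treeOrder {T : Set σ} {γ : Ordinal} (h : γ < treeOrder lt T) :
    derivIter lt T γ ≠ ∅ :=
  notMem_of_lt_csInf (s := {o : Ordinal.{0} | derivIter lt T o = ∅}) h (OrderBot.bddBelow _)

lemma LTD.treeOrder_isSucc {T : Set σ} {r : σ} (hr : r ∈ T)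
    (hroot : ∀ y ∈ T, y ≠ r → lt r y)
    (hne : ∃ γ, derivIter lt T γ = ∅) : ∃ γ, treeOrder lt T = γ + 1 := by
  have hβ : derivIter lt T (treeOrder lt T) = ∅ := LTD.treeOrder_spec hne
  rcases Ordinal.zero_or_succ_or_isSuccLimit (treeOrder lt T) with h0 | ⟨γ, hγ⟩ | hlim
  · rw [h0, LTD.dI_zero] at hβ
    exact absurd hβ (Set.nonempty_iff_ne_empty.mp ⟨r, hr⟩)
  · exact ⟨γ, by rw [← hγ]; rfl⟩
  · exfalso
    have : r ∈ derivIter lt T (treeOrder lt T) := by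
      rw [LTD.dI_limit lt T hlim]
      simp only [Set.mem_iInter]
      intro γ' h'
      exact LTD.dI_root hr hroot (Set.nonempty_iff_ne_empty.mpr (LTD.lt_treeOrder h'))
    rw [hβ] at this
    exact this

end AuxLTD

/-- **Lemma (limit trees).** A countable well-founded tree of limit order `α` is the union
of countably many mutually incomparable subtrees whose orders are successor ordinals
with supremum `α`. -/
theorem limit_tree_decomposition (σ : Type u) (le : σ → σ → Prop)
    (hpo : IsPartialOrder σ le) (T : Set σ) (hT : IsAbsTree le T)
    (hwf : TreeWF (strictOf le) T) (α : Ordinal.{0})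
    (hα : α.card ≤ Cardinal.aleph0) (hlim : Order.IsSuccLimit α)
    (ho : treeOrder (strictOf le) T = α) :
    ∃ (a : ℕ → Ordinal.{0}) (t : ℕ → Set σ),
      (∀ n, ∃ γ, a n = γ + 1) ∧
      α = ⨆ n, a n ∧
      (∀ n, t n ⊆ T ∧ treeOrder (strictOf le) (t n) = a n) ∧
      T = ⋃ n, t n ∧
      (∀ n m : ℕ, n ≠ m → ∀ x ∈ t n, ∀ y ∈ t m, ¬le x y ∧ ¬le y x) := by
  classical
  obtain ⟨hTne, hTct, hTfin⟩ := hT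
  have hrefl : ∀ a : σ, le a a := hpo.refl
  have htrans : ∀ a b c : σ, le a b → le b c → le a c := fun a b c => hpo.trans a b c
  have hantisymm : ∀ a b : σ, le a b → le b a → a = b := fun a b => hpo.antisymm a b
  set M : Set σ := {m | m ∈ T ∧ ∀ z ∈ T, le z m → z = m} with hMdef
  set Cm : σ → Set σ := fun m => {y | y ∈ T ∧ le m y} with hCmdef
  -- every element of T has a minimal node below it
  have hmin_ex : ∀ x ∈ T, ∃ m ∈ M, le m x := by
    intro x hx
    letI : PartialOrder σ :=
      { le := le
        le_refl := hpo.refl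
        le_trans := fun a b c => hpo.trans a b c
        le_antisymm := fun a b => hpo.antisymm a b }
    set P : Set σ := insert x {y | y ∈ T ∧ strictOf le y x} with hP
    have hPfin : P.Finite := ((hTfin x hx).1).insert x
    obtain ⟨a, haP, hamin⟩ : ∃ a ∈ P, ∀ a' ∈ P, a' ≤ a → a = a' := by
      obtain ⟨a, ha⟩ := Set.Finite.exists_minimal hPfin ⟨x, Set.mem_insert x _⟩
      exact ⟨a, ha.1, fun a' h1 h2 => ha.eq_of_ge h1 h2⟩
    have haT : a ∈ T := by
      rcases haP with rfl | ⟨h1, _⟩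
      exacts [hx, h1]
    have hax : le a x := by
      rcases haP with rfl | ⟨_, h2, _⟩
      exacts [hrefl a, h2]
    refine ⟨a, ⟨haT, ?_⟩, hax⟩
    intro z hz hza
    by_contra hne
    have hzxne : z ≠ x := by
      intro rfl'
      subst rfl'
      exact hne (hantisymm a z hax hza).symm
    have hzP : z ∈ P := Set.mem_insert_iff.mpr
      (Or.inr ⟨hz, htrans z a x hza hax, hzxne⟩)
    exact hne (hamin z hzP hza).symm
  -- uniqueness of the minimal node below a point
  have huniq : ∀ m ∈ M, ∀ m' ∈ M, ∀ y ∈ T, le m y → le m' y → m = m' := by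
    intro m hm m' hm' y hy hmy hm'y
    rcases eq_or_ne m y with rfl | hmne
    · exact (hm.2 m' hm'.1 hm'y).symm
    rcases eq_or_ne m' y with rfl | hm'ne
    · exact hm'.2 m hm.1 hmy
    rcases (hTfin y hy).2 m hm.1 ⟨hmy, hmne⟩ m' hm'.1 ⟨hm'y, hm'ne⟩ with h | h
    · exact hm'.2 m hm.1 h
    · exact (hm.2 m' hm'.1 h).symm
  have hCm_sub : ∀ m : σ, Cm m ⊆ T := fun m y hy => hy.1
  have hTun : T = ⋃ m : M, Cm m.1 := by
    ext x
    simp only [Set.mem_iUnion]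
    constructor
    · intro hx
      obtain ⟨m, hm, hmx⟩ := hmin_ex x hx
      exact ⟨⟨m, hm⟩, hx, hmx⟩
    · rintro ⟨m, hx, _⟩
      exact hx
  have hpair : ∀ i j : M, i ≠ j → ∀ x ∈ Cm i.1, ∀ y ∈ Cm j.1,
      x ≠ y ∧ ¬ strictOf le x y := by
    intro i j hij x hx y hy
    have key : ¬ le x y := by
      intro hxy
      exact hij (Subtype.ext
        (huniq i.1 i.2 j.1 j.2 y hy.1 (htrans _ _ _ hx.2 hxy) hy.2))
    exact ⟨fun h => key (h ▸ hrefl x), fun h => key h.1⟩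
  -- emptiness at stage α
  have hTempty : ∃ γ, derivIter (strictOf le) T γ = ∅ := by
    by_contra h
    push_neg at h
    have hset : {o : Ordinal.{0} | derivIter (strictOf le) T o = ∅} = ∅ := by
      ext o
      simp only [Set.mem_setOf_eq, Set.mem_empty_iff_false, iff_false]
      exact (h o).ne_empty
    have : treeOrder (strictOf le) T = 0 := by
      unfold treeOrder
      rw [hset, Ordinal.sInf_empty]
    rw [ho] at this
    exact hlim.pos.ne' this
  have hTα : derivIter (strictOf le) T α = ∅ := by
    have := LTD.treeOrder_spec (lt := strictOf le) hTempty
    rwa [ho] at this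
  have hCmα : ∀ m : M, derivIter (strictOf le) (Cm m.1) α = ∅ := fun m =>
    Set.eq_empty_of_subset_empty (hTα ▸ LTD.dI_mono (hCm_sub m.1) α)
  have hCmE : ∀ m : M, ∃ γ, derivIter (strictOf le) (Cm m.1) γ = ∅ :=
    fun m => ⟨α, hCmα m⟩
  have hsucc : ∀ m : M, ∃ γ, treeOrder (strictOf le) (Cm m.1) = γ + 1 := by
    intro m
    refine LTD.treeOrder_isSucc (r := m.1) ⟨m.2.1, hrefl m.1⟩ ?_ (hCmE m)
    intro y hy hym
    exact ⟨hy.2, fun h => hym h.symm⟩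
  have hbd : ∀ m : M, treeOrder (strictOf le) (Cm m.1) ≤ α := fun m =>
    csInf_le (OrderBot.bddBelow _) (hCmα m)
  set S : Set Ordinal.{0} :=
    Set.range (fun m : M => treeOrder (strictOf le) (Cm m.1)) with hSdef
  have hMne : M.Nonempty := by
    obtain ⟨x, hx⟩ := hTne
    obtain ⟨m, hm, _⟩ := hmin_ex x hx
    exact ⟨m, hm⟩
  haveI : Nonempty M := hMne.to_subtype
  have hSne : S.Nonempty := Set.range_nonempty _
  have hSbdd : BddAbove S := ⟨α, by rintro _ ⟨m, rfl⟩; exact hbd m⟩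
  have hαS : α = sSup S := by
    apply le_antisymm
    · have hcup : derivIter (strictOf le) T (sSup S) = ∅ := by
        rw [hTun, LTD.dI_iUnion _ hpair (sSup S)]
        rw [Set.iUnion_eq_empty]
        intro m
        exact LTD.dI_empty_mono (LTD.treeOrder_spec (hCmE m)) _
          (le_csSup hSbdd ⟨m, rfl⟩)
      rw [← ho]
      exact csInf_le (OrderBot.bddBelow _) hcup
    · exact csSup_le hSne (by rintro _ ⟨m, rfl⟩; exact hbd m)
  haveI hMinf : Infinite M := by
    rw [Set.infinite_coe_iff]
    intro hfin
    haveI : Finite M := hfin.to_subtype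
    have hSfin : S.Finite := Set.finite_range _
    have hmem := hSne.csSup_mem hSfin
    rw [← hαS] at hmem
    obtain ⟨m, hm⟩ := hmem
    obtain ⟨γ, hγ⟩ := hsucc m
    simp only at hm
    rw [hγ] at hm
    have h1 : γ < α := by
      rw [← hm, Ordinal.add_one_eq_succ]
      exact Order.lt_succ γ
    have h2 := hlim.succ_lt h1
    rw [← Ordinal.add_one_eq_succ, hm] at h2
    exact lt_irrefl α h2
  have hMct : M.Countable := hTct.mono fun m hm => hm.1
  haveI : Countable M := hMct.to_subtype
  haveI : Encodable M := Encodable.ofCountable _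
  haveI : Denumerable M := Denumerable.ofEncodableOfInfinite _
  let e : ℕ ≃ M := (Denumerable.eqv M).symm
  refine ⟨fun n => treeOrder (strictOf le) (Cm (e n).1),
    fun n => Cm (e n).1, fun n => hsucc (e n), ?_, fun n => ⟨hCm_sub _, rfl⟩, ?_, ?_⟩
  · have hrg : (Set.range fun n : ℕ => treeOrder (strictOf le) (Cm ((e n) : σ))) = S := by
      rw [hSdef]
      exact Function.Surjective.range_comp e.surjective
        (fun m : ↥M => treeOrder (strictOf le) (Cm m.1))
    rw [hαS, iSup, hrg]
  · rw [hTun]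
    exact (e.surjective.iUnion_comp fun m : M => Cm m.1).symm
  · intro n m hnm x hx y hy
    have hne : e n ≠ e m := fun h => hnm (e.injective h)
    constructor
    · intro hxy
      exact hne (Subtype.ext
        (huniq _ (e n).2 _ (e m).2 y hy.1 (htrans _ _ _ hx.2 hxy) hy.2))
    · intro hyx
      exact hne (Subtype.ext
        (huniq _ (e n).2 _ (e m).2 x hx.1 hx.2 (htrans _ _ _ hy.2 hyx)))
end
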